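/- The q-overlapping shuffle product on the free Z[q]-module with basis all compositions is associative. -/

import Mathlib

/-- The weight of a composition: the sum of its entries. -/
def wtc (α : List ℕ+) : ℕ := (α.map fun a => (a : ℕ)).sum

/-- The q-overlapping shuffle product of two compositions, with values in the
free module over `ℤ[q]` (`q = Polynomial.X`) on compositions:
`[] ×_q β = β`, `α ×_q [] = α`, and
`(a::α') ×_q (b::β') = a::(α' ×_q (b::β')) + q^{b·wt(a::α')}·b::((a::α') ×_q β')`
`+ q^{b·wt(α')}·(a+b)::(α' ×_q β')`. -/
noncomputable def qosh : List ℕ+ → List ℕ+ → (List ℕ+ →₀ Polynomial ℤ)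
  | [], β => Finsupp.single β 1
  | a :: α', [] => Finsupp.single (a :: α') 1
  | a :: α', b :: β' =>
      Finsupp.mapDomain (a :: ·) (qosh α' (b :: β'))
        + ((Polynomial.X : Polynomial ℤ) ^ ((b : ℕ) * wtc (a :: α'))) •
            Finsupp.mapDomain (b :: ·) (qosh (a :: α') β')
        + ((Polynomial.X : Polynomial ℤ) ^ ((b : ℕ) * wtc α')) •
            Finsupp.mapDomain ((a + b) :: ·) (qosh α' β')
  termination_by α β => α.length + β.length
  decreasing_by all_goals (simp [List.length_cons]; try omega)

/-- The `ℤ[q]`-bilinear extension of the q-overlapping shuffle product. -/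
noncomputable def qoshMul (x y : List ℕ+ →₀ Polynomial ℤ) : List ℕ+ →₀ Polynomial ℤ :=
  x.sum fun α c => y.sum fun β d => (c * d) • qosh α β

/-
Write `B` for the bilinear extension of `qosh`. The product is homogeneous for the weight, and
the defining recursion of `qosh` survives linear extension in either argument as long as the
other one is a single composition with a given first letter; in the left argument this needs
homogeneity, because the exponent of `q` depends on the weight of the left factor.
Associativity `B (qosh α β) γ = B α (qosh β γ)` on compositions follows by induction on the
total length: when `α`, `β`, `γ = c :: γ'` are nonempty, expanding both sides by these
recursions, all terms except those starting with `c` match through the induction hypothesis,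
and those starting with `c` regroup into `B (qosh α β) γ'`, to which the induction hypothesis
applies once more. Trilinearity extends associativity to the whole module.
-/

open Polynomial Finsupp

local notation "M" => List ℕ+ →₀ ℤ[X]

theorem wtc_cons (a : ℕ+) (δ : List ℕ+) : wtc (a :: δ) = a + wtc δ := by
  simp [wtc]

theorem qosh_nil_left (β : List ℕ+) : qosh [] β = single β 1 := by
  rw [qosh]

theorem qosh_nil_right (α : List ℕ+) : qosh α [] = single α 1 := by
  cases α <;> rw [qosh]

theorem qosh_cons_cons (a b : ℕ+) (α β : List ℕ+) :
    qosh (a :: α) (b :: β) =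
      mapDomain (a :: ·) (qosh α (b :: β)) +
        (X : ℤ[X]) ^ (b * wtc (a :: α) : ℕ) • mapDomain (b :: ·) (qosh (a :: α) β) +
        (X : ℤ[X]) ^ (b * wtc α : ℕ) • mapDomain ((a + b) :: ·) (qosh α β) := by
  rw [qosh]

noncomputable def weightSubmodule (w : ℕ) : Submodule ℤ[X] M :=
  supported ℤ[X] ℤ[X] {δ | wtc δ = w}

theorem single_mem_weightSubmodule (δ : List ℕ+) (c : ℤ[X]) :
    single δ c ∈ weightSubmodule (wtc δ) :=
  single_mem_supported _ _ rfl

theorem mapDomain_cons_mem_weightSubmodule {a : ℕ+} {w : ℕ} {z : M}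
    (hz : z ∈ weightSubmodule w) : mapDomain (a :: ·) z ∈ weightSubmodule (a + w) := by
  have hmap := Submodule.mem_map_of_mem (f := lmapDomain ℤ[X] ℤ[X] (a :: ·)) hz
  rw [weightSubmodule, lmapDomain_supported] at hmap
  refine supported_mono ?_ hmap
  rintro _ ⟨δ, rfl, rfl⟩
  exact wtc_cons a δ

theorem qosh_mem_weightSubmodule :
    ∀ α β : List ℕ+, qosh α β ∈ weightSubmodule (wtc α + wtc β)
  | [], β => by
    simpa [qosh_nil_left, wtc] using single_mem_weightSubmodule β 1
  | a :: α, [] => by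
    simpa [qosh_nil_right, wtc] using single_mem_weightSubmodule (a :: α) 1
  | a :: α, b :: β => by
    have h₁ := mapDomain_cons_mem_weightSubmodule (a := a) (qosh_mem_weightSubmodule α (b :: β))
    have h₂ := mapDomain_cons_mem_weightSubmodule (a := b) (qosh_mem_weightSubmodule (a :: α) β)
    have h₃ := mapDomain_cons_mem_weightSubmodule (a := a + b) (qosh_mem_weightSubmodule α β)
    simp only [wtc_cons, PNat.add_coe] at h₁ h₂ h₃ ⊢
    rw [qosh_cons_cons]
    refine add_mem (add_mem ?_ (Submodule.smul_mem _ _ ?_)) (Submodule.smul_mem _ _ ?_)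
    · convert h₁ using 2; ring
    · convert h₂ using 2; ring
    · convert h₃ using 2; ring
  termination_by α β => α.length + β.length

noncomputable def qoshBilin : M →ₗ[ℤ[X]] M →ₗ[ℤ[X]] M :=
  linearCombination ℤ[X] fun α => linearCombination ℤ[X] (qosh α)

theorem qoshMul_eq_qoshBilin (x y : M) : qoshMul x y = qoshBilin x y := by
  simp only [qoshMul, qoshBilin, linearCombination_apply, LinearMap.finsupp_sum_apply,
    LinearMap.smul_apply, Finsupp.smul_sum, mul_smul]

theorem qoshBilin_single_single (α β : List ℕ+) :
    qoshBilin (single α 1) (single β 1) = qosh α β := by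
  simp [qoshBilin]


theorem qoshBilin_nil_left (z : M) : qoshBilin (single [] 1) z = z := by
  induction z using Finsupp.induction_linear with
  | zero => simp
  | add z z' hz hz' => rw [map_add, hz, hz']
  | single δ d => rw [← smul_single_one δ d, map_smul, qoshBilin_single_single, qosh_nil_left]

theorem qoshBilin_nil_right (z : M) : qoshBilin z (single [] 1) = z := by
  induction z using Finsupp.induction_linear with
  | zero => simp
  | add z z' hz hz' => rw [map_add, LinearMap.add_apply, hz, hz']
  | single δ d =>
    rw [← smul_single_one δ d, map_smul, LinearMap.smul_apply, qoshBilin_single_single,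
      qosh_nil_right]

theorem qoshBilin_single_cons_mapDomain_cons (a c : ℕ+) (α : List ℕ+) (z : M) :
    qoshBilin (single (a :: α) 1) (mapDomain (c :: ·) z) =
      mapDomain (a :: ·) (qoshBilin (single α 1) (mapDomain (c :: ·) z)) +
        (X : ℤ[X]) ^ (c * wtc (a :: α) : ℕ) •
          mapDomain (c :: ·) (qoshBilin (single (a :: α) 1) z) +
        (X : ℤ[X]) ^ (c * wtc α : ℕ) •
          mapDomain ((a + c) :: ·) (qoshBilin (single α 1) z) := by
  induction z using Finsupp.induction_linear with
  | zero => simp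
  | add z z' hz hz' =>
    simp only [mapDomain_add, map_add, hz, hz', smul_add]
    abel
  | single δ d =>
    rw [← smul_single_one δ d]
    simp only [mapDomain_smul, map_smul, mapDomain_single, qoshBilin_single_single,
      qosh_cons_cons, smul_add, smul_comm d]

theorem qoshBilin_mapDomain_cons_single_cons (a c : ℕ+) (γ : List ℕ+) {w : ℕ} {z : M}
    (hz : z ∈ weightSubmodule w) :
    qoshBilin (mapDomain (a :: ·) z) (single (c :: γ) 1) =
      mapDomain (a :: ·) (qoshBilin z (single (c :: γ) 1)) +
        (X : ℤ[X]) ^ (c * (a + w) : ℕ) •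
          mapDomain (c :: ·) (qoshBilin (mapDomain (a :: ·) z) (single γ 1)) +
        (X : ℤ[X]) ^ (c * w : ℕ) • mapDomain ((a + c) :: ·) (qoshBilin z (single γ 1)) := by
  rw [weightSubmodule, supported_eq_span_single] at hz
  induction hz using Submodule.span_induction with
  | mem _ hδ =>
    obtain ⟨δ, rfl : wtc δ = w, rfl⟩ := hδ
    simp only [mapDomain_single, qoshBilin_single_single, qosh_cons_cons, wtc_cons]
  | zero => simp
  | add z z' _ _ hz hz' =>
    simp only [mapDomain_add, map_add, LinearMap.add_apply, hz, hz', smul_add]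
    abel
  | smul d z _ hz =>
    simp only [mapDomain_smul, map_smul, LinearMap.smul_apply, hz, smul_add, smul_comm d]

theorem qoshBilin_qosh_assoc (α β γ : List ℕ+) :
    qoshBilin (qosh α β) (single γ 1) = qoshBilin (single α 1) (qosh β γ) := by
  match α, β, γ with
  | [], β, γ => rw [qosh_nil_left, qoshBilin_single_single, qoshBilin_nil_left]
  | a :: α, [], γ => rw [qosh_nil_right, qosh_nil_left]
  | a :: α, b :: β, [] =>
    rw [qosh_nil_right, qoshBilin_single_single, qoshBilin_nil_right]
  | a :: α, b :: β, c :: γ =>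
    rw [qosh_cons_cons a b α β]
    simp only [map_add, map_smul, LinearMap.add_apply, LinearMap.smul_apply]
    rw [qoshBilin_mapDomain_cons_single_cons a c γ (qosh_mem_weightSubmodule α (b :: β)),
      qoshBilin_mapDomain_cons_single_cons b c γ (qosh_mem_weightSubmodule (a :: α) β),
      qoshBilin_mapDomain_cons_single_cons (a + b) c γ (qosh_mem_weightSubmodule α β)]
    rw [qoshBilin_qosh_assoc α (b :: β) (c :: γ), qoshBilin_qosh_assoc (a :: α) β (c :: γ),
      qoshBilin_qosh_assoc α β (c :: γ), qoshBilin_qosh_assoc α (b :: β) γ,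
      qoshBilin_qosh_assoc (a :: α) β γ, qoshBilin_qosh_assoc α β γ, qosh_cons_cons b c β γ]
    simp only [map_add, map_smul]
    rw [qoshBilin_single_cons_mapDomain_cons a b α (qosh β (c :: γ)),
      qoshBilin_single_cons_mapDomain_cons a c α (qosh (b :: β) γ),
      qoshBilin_single_cons_mapDomain_cons a (b + c) α (qosh β γ),
      ← qoshBilin_qosh_assoc (a :: α) (b :: β) γ, qosh_cons_cons a b α β]
    simp only [map_add, map_smul, LinearMap.add_apply, LinearMap.smul_apply, mapDomain_add,
      mapDomain_smul, smul_add, smul_smul, wtc_cons, PNat.add_coe, add_assoc]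
    module
termination_by α.length + β.length + γ.length

/-- The q-overlapping shuffle product on the free `ℤ[q]`-module with basis all
compositions is associative. -/
theorem qoshMul_assoc :
    ∀ x y w : List ℕ+ →₀ Polynomial ℤ,
      qoshMul (qoshMul x y) w = qoshMul x (qoshMul y w) := by
  have hassoc : qoshBilin.compr₂ qoshBilin =
      ((LinearMap.llcomp ℤ[X] M M M).comp qoshBilin).compl₂ qoshBilin := by
    ext α β γ : 6
    simpa [qoshBilin_single_single] using qoshBilin_qosh_assoc α β γ
  intro x y w
  simpa [qoshMul_eq_qoshBilin] using LinearMap.congr_fun (LinearMap.congr_fun₂ hassoc x y) w
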